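/- For a planar sector S of opening angle α ∈ (0,2π), if D(R) = αR²/(8π) − (R²/(2π))∫₀¹ e^{−R²y²}√(1−y²) dy + (π²−α²)/(24πα), then there is a constant C such that |D(R) − (αR²/(8π) − R/(4√π) + (π²−α²)/(24πα) + 1/(16√π R))| ≤ C/R³ for all R ≥ 1. -/

import Mathlib

open MeasureTheory Set in
section

open Real intervalIntegral MeasureTheory Set

lemma shte_rpow_pow {R : ℝ} (hR : 0 < R) (n : ℕ) :
    ((R:ℝ) ^ 2) ^ (-((n:ℝ)) / 2) = (R ^ n)⁻¹ := by
  rw [← Real.rpow_natCast R 2, ← Real.rpow_mul hR.le, show ((2:ℕ):ℝ) * (-(n:ℝ)/2) = -(n:ℝ) by push_cast; ring,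
    Real.rpow_neg hR.le, Real.rpow_natCast]

lemma shte_moment2 {R : ℝ} (hR : 0 < R) :
    ∫ x in Ioi (0:ℝ), x ^ 2 * exp (-R ^ 2 * x ^ 2) = sqrt π / 4 * (R ^ 3)⁻¹ := by
  have hb : (0:ℝ) < R ^ 2 := by positivity
  have h := integral_rpow_mul_exp_neg_mul_rpow (p := 2) (q := 2) two_pos (by norm_num) hb
  simp only [rpow_two] at h
  rw [h, show (-((2:ℝ)+1)/2) = -((3:ℕ):ℝ)/2 by norm_num, shte_rpow_pow hR,
    show ((2:ℝ)+1)/2 = 1/2 + 1 by norm_num, Real.Gamma_add_one (by norm_num),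
    Real.Gamma_one_half_eq]
  ring

lemma shte_moment4 {R : ℝ} (hR : 0 < R) :
    ∫ x in Ioi (0:ℝ), x ^ 4 * exp (-R ^ 2 * x ^ 2) = 3 * sqrt π / 8 * (R ^ 5)⁻¹ := by
  have hb : (0:ℝ) < R ^ 2 := by positivity
  have h := integral_rpow_mul_exp_neg_mul_rpow (p := 2) (q := 4) two_pos (by norm_num) hb
  simp only [rpow_two, show ((4:ℝ)) = ((4:ℕ):ℝ) by norm_num, Real.rpow_natCast] at h
  rw [h, show (-(((4:ℕ):ℝ)+1)/2) = -((5:ℕ):ℝ)/2 by norm_num, shte_rpow_pow hR,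
    show ((((4:ℕ)):ℝ)+1)/2 = (1/2 + 1) + 1 by norm_num, Real.Gamma_add_one (by norm_num),
    Real.Gamma_add_one (by norm_num), Real.Gamma_one_half_eq]
  ring

lemma shte_sqrt_bound {y : ℝ} (hy0 : 0 < y) (hy1 : y ≤ 1) :
    |sqrt (1 - y ^ 2) - (1 - y ^ 2 / 2)| ≤ y ^ 4 / 2 := by
  have h1 : (0:ℝ) ≤ 1 - y ^ 2 := by nlinarith
  have hc : (0:ℝ) ≤ 1 - y ^ 2 / 2 - y ^ 4 / 2 := by nlinarith
  have hlow : 1 - y ^ 2 / 2 - y ^ 4 / 2 ≤ sqrt (1 - y ^ 2) := by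
    have h2 : (1 - y ^ 2 / 2 - y ^ 4 / 2) ^ 2 ≤ 1 - y ^ 2 := by
      have key : 0 ≤ y ^ 2 * y ^ 2 * (1 - y ^ 2) * (3 + y ^ 2) := by
        apply mul_nonneg (mul_nonneg (by positivity) h1); positivity
      nlinarith [key]
    calc 1 - y ^ 2 / 2 - y ^ 4 / 2 = sqrt ((1 - y ^ 2 / 2 - y ^ 4 / 2) ^ 2) :=
          (Real.sqrt_sq hc).symm
      _ ≤ sqrt (1 - y ^ 2) := Real.sqrt_le_sqrt h2
  have hup : sqrt (1 - y ^ 2) ≤ 1 - y ^ 2 / 2 := by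
    have h2 : 1 - y ^ 2 ≤ (1 - y ^ 2 / 2) ^ 2 := by nlinarith
    calc sqrt (1 - y ^ 2) ≤ sqrt ((1 - y ^ 2 / 2) ^ 2) := Real.sqrt_le_sqrt h2
      _ = 1 - y ^ 2 / 2 := Real.sqrt_sq (by nlinarith)
  rw [abs_le]
  constructor <;> nlinarith [Real.sqrt_nonneg (1 - y ^ 2)]

lemma shte_tail_bound {y : ℝ} (hy : 1 < y) : |1 - y ^ 2 / 2| ≤ y ^ 4 / 2 := by
  rw [abs_le]
  constructor <;> nlinarith [sq_nonneg y, sq_nonneg (y^2 - 1)]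

lemma shte_main {R : ℝ} (hR : 1 ≤ R) :
    |(∫ y in Ioi (0:ℝ), exp (-R ^ 2 * y ^ 2) * (1 - y ^ 2 / 2))
      - ∫ y in Ioc (0:ℝ) 1, exp (-R ^ 2 * y ^ 2) * sqrt (1 - y ^ 2)|
      ≤ 3 * sqrt π / 16 * (R ^ 5)⁻¹ := by
  have hR0 : (0:ℝ) < R := lt_of_lt_of_le one_pos hR
  have hb : (0:ℝ) < R ^ 2 := by positivity
  set f : ℝ → ℝ := fun y => exp (-R ^ 2 * y ^ 2) * sqrt (1 - y ^ 2) with hf_def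
  set g : ℝ → ℝ := fun y => exp (-R ^ 2 * y ^ 2) * (1 - y ^ 2 / 2) with hg_def
  set φ : ℝ → ℝ := fun y => y ^ 4 * exp (-R ^ 2 * y ^ 2) / 2 with hφ_def
  have hint4 : Integrable (fun y : ℝ => y ^ 4 * exp (-R ^ 2 * y ^ 2)) := by
    have h := integrable_rpow_mul_exp_neg_mul_sq hb (by norm_num : (-1:ℝ) < 4)
    refine h.congr (Filter.Eventually.of_forall fun y => ?_)
    show y ^ (4:ℝ) * rexp (-R ^ 2 * y ^ 2) = y ^ (4:ℕ) * rexp (-R ^ 2 * y ^ 2)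
    rw [show (4:ℝ) = ((4:ℕ):ℝ) by norm_num, Real.rpow_natCast]
  have hint2 : Integrable (fun y : ℝ => y ^ 2 * exp (-R ^ 2 * y ^ 2)) := by
    have := integrable_rpow_mul_exp_neg_mul_sq hb (by norm_num : (-1:ℝ) < 2)
    simpa [rpow_two] using this
  have hexp : Integrable (fun y : ℝ => exp (-R ^ 2 * y ^ 2)) := integrable_exp_neg_mul_sq hb
  have hφint : Integrable φ := hint4.div_const 2
  have hgint : Integrable g := by
    refine (hexp.sub (hint2.div_const 2)).congr (Filter.Eventually.of_forall fun y => ?_)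
    simp only [hg_def, Pi.sub_apply]; ring
  have hfint : IntegrableOn f (Ioc (0:ℝ) 1) := by
    apply Continuous.integrableOn_Ioc
    exact (Real.continuous_exp.comp (by continuity)).mul (Real.continuous_sqrt.comp (by continuity))
  -- split of g and φ over Ioi 0
  have hsplit : ∀ (F : ℝ → ℝ), Integrable F →
      (∫ y in Ioi (0:ℝ), F y) = (∫ y in Ioc (0:ℝ) 1, F y) + ∫ y in Ioi (1:ℝ), F y := by
    intro F hF
    rw [← setIntegral_union (Ioc_disjoint_Ioi le_rfl) measurableSet_Ioi
      hF.integrableOn hF.integrableOn, Ioc_union_Ioi_eq_Ioi zero_le_one]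
  -- bound on Ioc 0 1
  have hb1 : |(∫ y in Ioc (0:ℝ) 1, g y) - ∫ y in Ioc (0:ℝ) 1, f y| ≤ ∫ y in Ioc (0:ℝ) 1, φ y := by
    rw [← integral_sub hgint.integrableOn hfint, ← Real.norm_eq_abs]
    refine norm_integral_le_of_norm_le hφint.integrableOn ?_
    filter_upwards [ae_restrict_mem measurableSet_Ioc] with y hy
    rw [Real.norm_eq_abs, show g y - f y
        = exp (-R ^ 2 * y ^ 2) * ((1 - y ^ 2 / 2) - sqrt (1 - y ^ 2)) by simp [hf_def, hg_def]; ring,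
      abs_mul, abs_of_pos (exp_pos _), show φ y = exp (-R ^ 2 * y ^ 2) * (y ^ 4 / 2) by
        simp only [hφ_def]; ring]
    have := shte_sqrt_bound hy.1 hy.2
    rw [abs_sub_comm] at this
    exact mul_le_mul_of_nonneg_left this (exp_pos _).le
  -- bound on Ioi 1
  have hb2 : |∫ y in Ioi (1:ℝ), g y| ≤ ∫ y in Ioi (1:ℝ), φ y := by
    rw [← Real.norm_eq_abs]
    refine norm_integral_le_of_norm_le hφint.integrableOn ?_
    filter_upwards [ae_restrict_mem measurableSet_Ioi] with y hy
    rw [Real.norm_eq_abs, hg_def, abs_mul, abs_of_pos (exp_pos _),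
      show φ y = exp (-R ^ 2 * y ^ 2) * (y ^ 4 / 2) by simp only [hφ_def]; ring]
    exact mul_le_mul_of_nonneg_left (shte_tail_bound hy) (exp_pos _).le
  have hφval : (∫ y in Ioi (0:ℝ), φ y) = 3 * sqrt π / 16 * (R ^ 5)⁻¹ := by
    simp only [hφ_def]
    rw [MeasureTheory.integral_div, shte_moment4 hR0]
    ring
  calc |(∫ y in Ioi (0:ℝ), g y) - ∫ y in Ioc (0:ℝ) 1, f y|
      = |((∫ y in Ioc (0:ℝ) 1, g y) - ∫ y in Ioc (0:ℝ) 1, f y) + ∫ y in Ioi (1:ℝ), g y| := by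
        rw [hsplit g hgint]; congr 1; ring
    _ ≤ |(∫ y in Ioc (0:ℝ) 1, g y) - ∫ y in Ioc (0:ℝ) 1, f y| + |∫ y in Ioi (1:ℝ), g y| :=
        abs_add_le _ _
    _ ≤ (∫ y in Ioc (0:ℝ) 1, φ y) + ∫ y in Ioi (1:ℝ), φ y := add_le_add hb1 hb2
    _ = ∫ y in Ioi (0:ℝ), φ y := (hsplit φ hφint).symm
    _ = 3 * sqrt π / 16 * (R ^ 5)⁻¹ := hφval

lemma shte_gval {R : ℝ} (hR : 0 < R) :
    (∫ y in Ioi (0:ℝ), exp (-R ^ 2 * y ^ 2) * (1 - y ^ 2 / 2))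
      = sqrt π / (2 * R) - sqrt π / 8 * (R ^ 3)⁻¹ := by
  have hb : (0:ℝ) < R ^ 2 := by positivity
  have hint2 : Integrable (fun y : ℝ => y ^ 2 * exp (-R ^ 2 * y ^ 2)) := by
    have := integrable_rpow_mul_exp_neg_mul_sq hb (by norm_num : (-1:ℝ) < 2)
    simpa [rpow_two] using this
  have hexp : Integrable (fun y : ℝ => exp (-R ^ 2 * y ^ 2)) := integrable_exp_neg_mul_sq hb
  have heq : ∀ y : ℝ, exp (-R ^ 2 * y ^ 2) * (1 - y ^ 2 / 2)
      = exp (-R ^ 2 * y ^ 2) - (y ^ 2 * exp (-R ^ 2 * y ^ 2)) / 2 := fun y => by ring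
  simp only [heq]
  rw [integral_sub hexp.integrableOn ((hint2.div_const 2).integrableOn),
    MeasureTheory.integral_div, shte_moment2 hR, integral_gaussian_Ioi,
    Real.sqrt_div pi_pos.le, Real.sqrt_sq hR.le]
  ring


end

open Real intervalIntegral

/-- Large-`R` expansion of the sector heat trace
`D(R) = αR²/(8π) - (R²/(2π))∫₀¹ e^{-R²y²}√(1-y²) dy + (π²-α²)/(24πα)`:
`|D(R) - (αR²/(8π) - R/(4√π) + (π²-α²)/(24πα) + 1/(16√π R))| ≤ C/R³` for `R ≥ 1`. -/
theorem sector_heat_trace_expansion (α : ℝ) (hα : α ∈ Set.Ioo (0 : ℝ) (2 * π))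
    (D : ℝ → ℝ)
    (hD : ∀ R : ℝ, 0 < R → D R = α * R ^ 2 / (8 * π)
      - (R ^ 2 / (2 * π)) * (∫ y in (0 : ℝ)..1, exp (-R ^ 2 * y ^ 2) * sqrt (1 - y ^ 2))
      + (π ^ 2 - α ^ 2) / (24 * π * α)) :
    ∃ C : ℝ, 0 < C ∧ ∀ R : ℝ, 1 ≤ R →
      |D R - (α * R ^ 2 / (8 * π) - R / (4 * sqrt π)
        + (π ^ 2 - α ^ 2) / (24 * π * α) + 1 / (16 * sqrt π * R))| ≤ C / R ^ 3 := by
  refine ⟨1, one_pos, fun R hR => ?_⟩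
  have hR0 : (0:ℝ) < R := lt_of_lt_of_le one_pos hR
  have hsπ : (0:ℝ) < sqrt π := Real.sqrt_pos.mpr pi_pos
  have hsq : sqrt π * sqrt π = π := Real.mul_self_sqrt pi_pos.le
  rw [hD R hR0, intervalIntegral.integral_of_le zero_le_one]
  set J := ∫ y in Set.Ioc (0:ℝ) 1, exp (-R ^ 2 * y ^ 2) * sqrt (1 - y ^ 2) with hJ_def
  set K := ∫ y in Set.Ioi (0:ℝ), exp (-R ^ 2 * y ^ 2) * (1 - y ^ 2 / 2) with hK_def
  have hKval : K = sqrt π / (2 * R) - sqrt π / 8 * (R ^ 3)⁻¹ := shte_gval hR0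
  have hid : α * R ^ 2 / (8 * π) - R ^ 2 / (2 * π) * J + (π ^ 2 - α ^ 2) / (24 * π * α)
      - (α * R ^ 2 / (8 * π) - R / (4 * sqrt π) + (π ^ 2 - α ^ 2) / (24 * π * α)
        + 1 / (16 * sqrt π * R))
      = R ^ 2 / (2 * π) * (K - J) := by
    rw [hKval]
    field_simp
    linear_combination (3072 - 12288 * R ^ 2) * hsq
  rw [hid, abs_mul, abs_of_pos (show (0:ℝ) < R ^ 2 / (2 * π) by positivity)]
  have hmain := shte_main hR
  rw [← hK_def, ← hJ_def] at hmain
  calc R ^ 2 / (2 * π) * |K - J| ≤ R ^ 2 / (2 * π) * (3 * sqrt π / 16 * (R ^ 5)⁻¹) :=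
        mul_le_mul_of_nonneg_left hmain (by positivity)
    _ ≤ 1 / R ^ 3 := by
        rw [le_div_iff₀ (by positivity), show R ^ 2 / (2 * π) * (3 * sqrt π / 16 * (R ^ 5)⁻¹) * R ^ 3
          = 3 * sqrt π / (32 * π) by field_simp; ring, div_le_one (by positivity)]
        have h1 : sqrt π ≤ 2 := by
          rw [show (2:ℝ) = sqrt 4 by rw [show (4:ℝ) = 2 ^ 2 by norm_num, Real.sqrt_sq]; norm_num]
          exact Real.sqrt_le_sqrt pi_le_four
        nlinarith [pi_gt_three]
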